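/- Let C be a flag code of type (t_1,...,t_r) on F_q^n with d_f(C) > D(i_1,...,i_M)^{(t,n)} for some indices 1 ≤ i_1 < ... < i_M ≤ r. Then |C| ≤ |F_q((t_{i_1},...,t_{i_M}), n)|, the number of flags of type (t_{i_1},...,t_{i_M}) on F_q^n, which equals the product of Gaussian binomial coefficients [n choose t_{i_1}]_q [n - t_{i_1} choose t_{i_2} - t_{i_1}]_q ... [n - t_{i_{M-1}} choose n - t_{i_M}]_q. -/

import Mathlib

open Module Finset

/-- Subspace distance `d_S(U,V) = dim(U+V) - dim(U∩V)`. -/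
noncomputable def subDist {K : Type*} [Field K] {n : ℕ}
    (U V : Submodule K (Fin n → K)) : ℕ :=
  finrank K ↥(U ⊔ V) - finrank K ↥(U ⊓ V)

/-- Flag distance (flags indexed by `1, ..., r`). -/
noncomputable def flagDist {K : Type*} [Field K] {n : ℕ} (r : ℕ)
    (F F' : ℕ → Submodule K (Fin n → K)) : ℕ :=
  ∑ j ∈ Finset.Icc 1 r, subDist (F j) (F' j)

/-- `D(i_1,...,i_M)^{(t,n)} = Σ_{j=1}^r min{2t_j, 2(n-t_j), 2|t_j-t_{i_1}|, ..., 2|t_j-t_{i_M}|}`. -/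
def DmultiType (n r M : ℕ) (hM : 1 ≤ M) (t i : ℕ → ℕ) : ℕ :=
  ∑ j ∈ Finset.Icc 1 r,
    min (2 * t j) (min (2 * (n - t j))
      ((Finset.Icc 1 M).inf' (Finset.nonempty_Icc.mpr hM)
        (fun l => 2 * ((t j : ℤ) - (t (i l) : ℤ)).natAbs)))

/-- The Gaussian binomial coefficient `[a choose b]_q` (the division is exact). -/
def gaussBinom (q a b : ℕ) : ℕ :=
  (∏ s ∈ Finset.range b, (q ^ (a - s) - 1)) / (∏ s ∈ Finset.range b, (q ^ (s + 1) - 1))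

/-!
Two flags of `C` with the same subflag `(F i₁, …, F i_M)` are at distance at most
`D(i₁, …, i_M)`: at each position `j`, the subspaces `F j` and `F' j` of equal dimension lie
between `0` and `𝔽_qⁿ`, and on the same side of each common member `F i_l`, which bounds their
subspace distance by every term of the minimum. So the distance hypothesis makes `F ↦ (F i_l)_l`
injective on `C`.

Flags of type `(d₁, …, d_M)` are counted by extending a flag by one more subspace of dimension
`d_{M+1}` containing its last member `G_M`; these correspond to the `(d_{M+1} - d_M)`-dimensional
subspaces of `V ⧸ G_M`. The `k`-dimensional subspaces of an `m`-dimensional space are counted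
through the spans of the linearly independent `k`-tuples.
-/

theorem monotoneOn_Icc_of_le_succ {α : Type*} [Preorder α] {f : ℕ → α} {a b : ℕ}
    (h : ∀ j, a ≤ j → j < b → f j ≤ f (j + 1)) : MonotoneOn f (Set.Icc a b) := by
  rintro j ⟨hja, -⟩ k ⟨-, hkb⟩ hjk
  induction k, hjk using Nat.le_induction with
  | base => exact le_rfl
  | succ k hjk ih => exact (ih (by omega)).trans (h k (by omega) (by omega))

theorem prod_range_pow_sub_pow (q m d : ℕ) (hdm : d ≤ m) :
    ∏ s ∈ range d, (q ^ m - q ^ s) =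
      (∏ s ∈ range d, q ^ s) * ∏ s ∈ range d, (q ^ (m - s) - 1) := by
  rw [← prod_mul_distrib]
  refine prod_congr rfl fun s hs => ?_
  rw [Nat.mul_sub, mul_one, ← pow_add, Nat.add_sub_of_le (by simp at hs; omega)]

theorem eq_gaussBinom_of_mul_eq {q m d N : ℕ} (hq : 1 < q) (hdm : d ≤ m)
    (h : N * ∏ s ∈ range d, (q ^ d - q ^ s) = ∏ s ∈ range d, (q ^ m - q ^ s)) :
    N = gaussBinom q m d := by
  rw [prod_range_pow_sub_pow q d d le_rfl, prod_range_pow_sub_pow q m d hdm,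
    ← prod_range_reflect (fun s => q ^ (d - s) - 1), mul_left_comm,
    Nat.mul_left_cancel_iff (prod_pos fun s _ => by positivity)] at h
  have hprod : ∏ s ∈ range d, (q ^ (d - (d - 1 - s)) - 1) =
      ∏ s ∈ range d, (q ^ (s + 1) - 1) :=
    prod_congr rfl fun s hs => by rw [mem_range] at hs; congr 2; omega
  rw [hprod] at h
  refine (Nat.div_eq_of_eq_mul_left (prod_pos fun s _ => ?_) h.symm).symm
  exact Nat.sub_pos_of_lt (Nat.one_lt_pow (Nat.succ_ne_zero s) hq)

section Quotient
variable {K V : Type*} [Field K] [AddCommGroup V] [Module K V] [FiniteDimensional K V]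

theorem finrank_comap_mkQ (W : Submodule K V) (U : Submodule K (V ⧸ W)) :
    finrank K (U.comap W.mkQ) = finrank K U + finrank K W := by
  have hW : W ≤ U.comap W.mkQ := Submodule.le_comap_mkQ W U
  have := LinearMap.finrank_range_add_finrank_ker (W.mkQ.domRestrict (U.comap W.mkQ))
  rwa [LinearMap.range_domRestrict, Submodule.map_comap_eq_of_surjective W.mkQ_surjective,
    LinearMap.ker_domRestrict, Submodule.ker_mkQ,
    (Submodule.comapSubtypeEquivOfLe hW).finrank_eq, eq_comm] at this

end Quotient

section SubspaceCount

variable {K V : Type*} [Field K] [Fintype K] [AddCommGroup V] [Module K V]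
  [FiniteDimensional K V]

local notation "q" => Fintype.card K

def linearIndependentSpanEquiv {d : ℕ} (W : Submodule K V) (hW : finrank K W = d) :
    { s : { s : Fin d → V // LinearIndependent K s } // Submodule.span K (Set.range s.1) = W } ≃
      { s : Fin d → W // LinearIndependent K s } where
  toFun s := ⟨fun j => ⟨s.1.1 j, s.2.le (Submodule.subset_span ⟨j, rfl⟩)⟩,
    s.1.2.of_comp W.subtype⟩
  invFun s := ⟨⟨W.subtype ∘ s.1, s.2.map' W.subtype (Submodule.ker_subtype _)⟩, by
    have hspan : Submodule.span K (Set.range s.1) = ⊤ :=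
      Submodule.eq_of_le_of_finrank_eq le_top (by simp [finrank_span_eq_card s.2, hW])
    rw [Set.range_comp, ← Submodule.map_span, hspan, Submodule.map_top,
      Submodule.range_subtype]⟩
  left_inv _ := rfl
  right_inv _ := rfl

theorem card_finrank_eq_mul {d : ℕ} (hd : d ≤ finrank K V) :
    Nat.card { W : Submodule K V // finrank K W = d } * ∏ j : Fin d, (q ^ d - q ^ (j : ℕ)) =
      ∏ j : Fin d, (q ^ finrank K V - q ^ (j : ℕ)) := by
  have := Module.finite_of_finite K (M := V)
  have := Fintype.ofFinite { W : Submodule K V // finrank K W = d }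
  let span : { s : Fin d → V // LinearIndependent K s } →
      { W : Submodule K V // finrank K W = d } := fun s =>
    ⟨Submodule.span K (Set.range s.1), by simp [finrank_span_eq_card s.2]⟩
  have hfiber (W : { W : Submodule K V // finrank K W = d }) :
      Nat.card { s // span s = W } = ∏ j : Fin d, (q ^ d - q ^ (j : ℕ)) := by
    rw [Nat.card_congr ((Equiv.subtypeEquivRight fun s => Subtype.ext_iff).trans
      (linearIndependentSpanEquiv W.1 W.2)), card_linearIndependent W.2.ge, W.2]
  rw [← card_linearIndependent hd, ← Nat.card_congr (Equiv.sigmaFiberEquiv span),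
    Nat.card_sigma, Finset.sum_congr rfl fun W _ => hfiber W, sum_const, card_univ,
    Nat.card_eq_fintype_card, smul_eq_mul]

theorem card_finrank_eq {d : ℕ} (hd : d ≤ finrank K V) :
    Nat.card { W : Submodule K V // finrank K W = d } = gaussBinom q (finrank K V) d := by
  refine eq_gaussBinom_of_mul_eq Fintype.one_lt_card hd ?_
  rw [← Fin.prod_univ_eq_prod_range (fun s => q ^ d - q ^ s),
    ← Fin.prod_univ_eq_prod_range (fun s => q ^ finrank K V - q ^ s)]
  exact card_finrank_eq_mul hd

theorem card_ge_finrank_eq (W : Submodule K V) {e : ℕ} (hWe : finrank K W ≤ e)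
    (he : e ≤ finrank K V) :
    Nat.card { U : Submodule K V // W ≤ U ∧ finrank K U = e } =
      gaussBinom q (finrank K V - finrank K W) (e - finrank K W) := by
  have hquot : finrank K (V ⧸ W) = finrank K V - finrank K W := Submodule.finrank_quotient W
  rw [← hquot, ← card_finrank_eq (by omega)]
  refine Nat.card_congr
    { toFun U := ⟨U.1.map W.mkQ, ?_⟩
      invFun U := ⟨U.1.comap W.mkQ, Submodule.le_comap_mkQ W U, ?_⟩
      left_inv U := ?_
      right_inv U := ?_ }
  · have := finrank_comap_mkQ W (U.1.map W.mkQ)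
    rw [Submodule.comap_map_mkQ, sup_eq_right.mpr U.2.1, U.2.2] at this
    omega
  · rw [finrank_comap_mkQ, U.2]; omega
  · ext1; simp only [Submodule.comap_map_mkQ, sup_eq_right.mpr U.2.1]
  · ext1; exact Submodule.map_comap_eq_of_surjective W.mkQ_surjective U

end SubspaceCount

section Flags
variable {K V : Type*} [Field K] [AddCommGroup V] [Module K V]

variable (K V) in
def flagsOfType (M : ℕ) (d : ℕ → ℕ) : Set (ℕ → Submodule K V) :=
  { G | (∀ l, 1 ≤ l → l ≤ M → finrank K (G l) = d l) ∧
    (∀ l, 1 ≤ l → l < M → G l ≤ G (l + 1)) ∧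
    (∀ l, ¬(1 ≤ l ∧ l ≤ M) → G l = ⊥) }

theorem flagsOfType_zero (d : ℕ → ℕ) : flagsOfType K V 0 d = {⊥} := by
  ext G
  simp only [flagsOfType, Set.mem_ofPred_eq, Set.mem_singleton_iff, funext_iff]
  constructor
  · rintro ⟨-, -, h⟩ l; exact h l (by omega)
  · intro h; exact ⟨by omega, by omega, fun l _ => h l⟩

theorem finite_flagsOfType [Finite (Submodule K V)] (M : ℕ) (d : ℕ → ℕ) :
    (flagsOfType K V M d).Finite := by
  refine Set.Finite.of_finite_image (f := fun G (l : Fin (M + 1)) => G l) (Set.toFinite _) ?_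
  intro G hG G' hG' h
  funext l
  by_cases hl : l ≤ M
  · exact congrFun h ⟨l, by omega⟩
  · rw [hG.2.2 l (by omega), hG'.2.2 l (by omega)]

theorem update_succ_mem_flagsOfType {M : ℕ} {d : ℕ → ℕ} {G : ℕ → Submodule K V}
    (hG : G ∈ flagsOfType K V M d) {U : Submodule K V} (hGU : G M ≤ U)
    (hU : finrank K U = d (M + 1)) : Function.update G (M + 1) U ∈ flagsOfType K V (M + 1) d := by
  obtain ⟨hdim, hle, hbot⟩ := hG
  refine ⟨fun l h1 h2 => ?_, fun l h1 h2 => ?_, fun l hl => ?_⟩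
  · rcases eq_or_lt_of_le h2 with rfl | h2
    · rwa [Function.update_self]
    · rw [Function.update_of_ne (by omega)]; exact hdim l h1 (by omega)
  · rcases eq_or_lt_of_le (Nat.le_of_lt_succ h2) with rfl | h2
    · rwa [Function.update_self, Function.update_of_ne (by omega)]
    · rw [Function.update_of_ne (by omega), Function.update_of_ne (by omega)]
      exact hle l h1 h2
  · rw [Function.update_of_ne (by omega)]; exact hbot l (by omega)

theorem update_succ_bot_mem_flagsOfType {M : ℕ} {d : ℕ → ℕ} {G : ℕ → Submodule K V}
    (hG : G ∈ flagsOfType K V (M + 1) d) :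
    Function.update G (M + 1) ⊥ ∈ flagsOfType K V M d := by
  obtain ⟨hdim, hle, hbot⟩ := hG
  refine ⟨fun l h1 h2 => ?_, fun l h1 h2 => ?_, fun l hl => ?_⟩
  · rw [Function.update_of_ne (by omega)]; exact hdim l h1 (by omega)
  · rw [Function.update_of_ne (by omega), Function.update_of_ne (by omega)]
    exact hle l h1 (by omega)
  · rcases eq_or_ne l (M + 1) with rfl | hl'
    · simp
    · rw [Function.update_of_ne hl']; exact hbot l (by omega)

theorem le_succ_of_mem_flagsOfType {M : ℕ} {d : ℕ → ℕ} {G : ℕ → Submodule K V}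
    (hG : G ∈ flagsOfType K V (M + 1) d) : G M ≤ G (M + 1) := by
  rcases M.eq_zero_or_pos with rfl | hM
  · simp [hG.2.2 0 (by omega)]
  · exact hG.2.1 M hM (by omega)

def flagsOfTypeSuccEquiv (M : ℕ) (d : ℕ → ℕ) :
    flagsOfType K V (M + 1) d ≃
      Σ G : flagsOfType K V M d,
        { U : Submodule K V // G.1 M ≤ U ∧ finrank K U = d (M + 1) } where
  toFun G := ⟨⟨_, update_succ_bot_mem_flagsOfType G.2⟩, G.1 (M + 1), by
    simpa using le_succ_of_mem_flagsOfType G.2, G.2.1 (M + 1) (by omega) le_rfl⟩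
  invFun G := ⟨_, update_succ_mem_flagsOfType G.1.2 G.2.2.1 G.2.2.2⟩
  left_inv G := by ext1; simp
  right_inv G := by
    refine Sigma.subtype_ext (Subtype.ext ?_) (by simp)
    simp [G.1.2.2.2 (M + 1) (by omega)]

def restrictFlag (M : ℕ) (i : ℕ → ℕ) (F : ℕ → Submodule K V) (l : ℕ) :
    Submodule K V :=
  if 1 ≤ l ∧ l ≤ M then F (i l) else ⊥

theorem restrictFlag_mem_flagsOfType {r M : ℕ} {t i : ℕ → ℕ}
    (hi : ∀ l ∈ Set.Icc 1 M, i l ∈ Set.Icc 1 r) (himono : MonotoneOn i (Set.Icc 1 M))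
    {F : ℕ → Submodule K V} (hF : MonotoneOn F (Set.Icc 1 r))
    (hdim : ∀ j ∈ Set.Icc 1 r, finrank K (F j) = t j) :
    restrictFlag M i F ∈ flagsOfType K V M (fun l => t (i l)) := by
  refine ⟨fun l h1 h2 => ?_, fun l h1 h2 => ?_, fun l hl => if_neg hl⟩
  · rw [restrictFlag, if_pos ⟨h1, h2⟩]
    exact hdim _ (hi l ⟨h1, h2⟩)
  · have hl : l ∈ Set.Icc 1 M := ⟨h1, h2.le⟩
    have hl' : l + 1 ∈ Set.Icc 1 M := ⟨by omega, h2⟩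
    rw [restrictFlag, restrictFlag, if_pos (show 1 ≤ l ∧ l ≤ M from hl),
      if_pos (show 1 ≤ l + 1 ∧ l + 1 ≤ M from hl')]
    exact hF (hi l hl) (hi _ hl') (himono hl hl' (by omega))

end Flags

section FlagCount
variable {K V : Type*} [Field K] [Fintype K] [AddCommGroup V] [Module K V]
  [FiniteDimensional K V]

local notation "q" => Fintype.card K

-- `e` is the dimension `d M` of the last member, or `0` when `M = 0` (where `G 0 = ⊥`).
theorem card_flagsOfType_succ {M : ℕ} {d : ℕ → ℕ} {e : ℕ}
    (he : ∀ G ∈ flagsOfType K V M d, finrank K (G M) = e) (hed : e ≤ d (M + 1))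
    (hd : d (M + 1) ≤ finrank K V) :
    Nat.card (flagsOfType K V (M + 1) d) =
      Nat.card (flagsOfType K V M d) * gaussBinom q (finrank K V - e) (d (M + 1) - e) := by
  have := Module.finite_of_finite K (M := V)
  have := (finite_flagsOfType (K := K) (V := V) M d).fintype
  have hfiber (G : flagsOfType K V M d) :
      Nat.card { U : Submodule K V // G.1 M ≤ U ∧ finrank K U = d (M + 1) } =
        gaussBinom q (finrank K V - e) (d (M + 1) - e) := by
    rw [card_ge_finrank_eq _ ((he G.1 G.2).trans_le hed) hd, he G.1 G.2]
  rw [Nat.card_congr (flagsOfTypeSuccEquiv M d), Nat.card_sigma,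
    sum_congr rfl fun G _ => hfiber G, sum_const, card_univ, Nat.card_eq_fintype_card, smul_eq_mul]

theorem card_flagsOfType {M : ℕ} (hM : 1 ≤ M) {d : ℕ → ℕ}
    (hdmono : MonotoneOn d (Set.Icc 1 M)) (hd : d M ≤ finrank K V) :
    Nat.card (flagsOfType K V M d) = gaussBinom q (finrank K V) (d 1) *
      ∏ l ∈ Icc 2 M, gaussBinom q (finrank K V - d (l - 1)) (d l - d (l - 1)) := by
  induction M, hM using Nat.le_induction with
  | base =>
    have he (G) (hG : G ∈ flagsOfType K V 0 d) : finrank K (G 0) = 0 := by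
      simp [hG.2.2 0 (by omega)]
    rw [card_flagsOfType_succ he (Nat.zero_le _) hd, flagsOfType_zero]
    simp
  | succ M hM ih =>
    have he (G) (hG : G ∈ flagsOfType K V M d) : finrank K (G M) = d M := hG.1 M hM le_rfl
    rw [card_flagsOfType_succ he (hdmono ⟨hM, by omega⟩ ⟨by omega, le_rfl⟩ (by omega)) hd,
      ih (hdmono.mono (Set.Icc_subset_Icc_right (by omega)))
        ((hdmono ⟨hM, by omega⟩ ⟨by omega, le_rfl⟩ (by omega)).trans hd),
      prod_Icc_succ_top (by omega), mul_assoc, Nat.add_sub_cancel]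

end FlagCount

section FlagDistance
variable {K : Type*} [Field K] {n : ℕ}

theorem subDist_le_of_le {U U' W : Submodule K (Fin n → K)} (hU : U ≤ W) (hU' : U' ≤ W)
    (h : finrank K U = finrank K U') : subDist U U' ≤ 2 * (finrank K W - finrank K U) := by
  have hsum := Submodule.finrank_sup_add_finrank_inf_eq U U'
  have hsup : finrank K ↥(U ⊔ U') ≤ finrank K W := Submodule.finrank_mono (sup_le hU hU')
  unfold subDist
  omega

theorem subDist_le_of_ge {U U' W : Submodule K (Fin n → K)} (hU : W ≤ U) (hU' : W ≤ U')
    (h : finrank K U = finrank K U') : subDist U U' ≤ 2 * (finrank K U - finrank K W) := by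
  have hsum := Submodule.finrank_sup_add_finrank_inf_eq U U'
  have hinf : finrank K W ≤ finrank K ↥(U ⊓ U') := Submodule.finrank_mono (le_inf hU hU')
  unfold subDist
  omega

theorem flagDist_le_DmultiType {r M : ℕ} (hM : 1 ≤ M) {t i : ℕ → ℕ}
    (hi : ∀ l ∈ Set.Icc 1 M, i l ∈ Set.Icc 1 r) {F F' : ℕ → Submodule K (Fin n → K)}
    (hF : MonotoneOn F (Set.Icc 1 r)) (hF' : MonotoneOn F' (Set.Icc 1 r))
    (hdimF : ∀ j ∈ Set.Icc 1 r, finrank K (F j) = t j)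
    (hdimF' : ∀ j ∈ Set.Icc 1 r, finrank K (F' j) = t j)
    (hagree : ∀ l ∈ Set.Icc 1 M, F (i l) = F' (i l)) :
    flagDist r F F' ≤ DmultiType n r M hM t i := by
  refine sum_le_sum fun j hj => ?_
  have hj : j ∈ Set.Icc 1 r := by simpa using hj
  have hdim : finrank K (F j) = finrank K (F' j) := (hdimF j hj).trans (hdimF' j hj).symm
  refine le_min ?_ (le_min ?_ (le_inf' _ _ fun l hl => ?_))
  · simpa [hdimF j hj] using subDist_le_of_ge bot_le bot_le hdim
  · simpa [hdimF j hj] using subDist_le_of_le le_top le_top hdim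
  · have hl : l ∈ Set.Icc 1 M := by simpa using hl
    have hdimW := hdimF _ (hi l hl)
    rcases le_total j (i l) with hji | hij
    · have := subDist_le_of_le (hF hj (hi l hl) hji)
        (hagree l hl ▸ hF' hj (hi l hl) hji) hdim
      rw [hdimW, hdimF j hj] at this
      omega
    · have := subDist_le_of_ge (hF (hi l hl) hj hij)
        (hagree l hl ▸ hF' (hi l hl) hj hij) hdim
      rw [hdimW, hdimF j hj] at this
      omega

end FlagDistance

theorem stmt16_general {K : Type*} [Field K] [Fintype K] (n r M : ℕ)
    (hM : 1 ≤ M)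
    (t : ℕ → ℕ) (htr : t r < n)
    (htmono : ∀ j, 1 ≤ j → j < r → t j < t (j + 1))
    (i : ℕ → ℕ) (hi1 : 1 ≤ i 1) (hiM : i M ≤ r)
    (himono : ∀ l, 1 ≤ l → l < M → i l < i (l + 1))
    (C : Set (ℕ → Submodule K (Fin n → K)))
    (hdim : ∀ F ∈ C, ∀ j, 1 ≤ j → j ≤ r → finrank K ↥(F j) = t j)
    (hnest : ∀ F ∈ C, ∀ j, 1 ≤ j → j < r → F j ≤ F (j + 1))
    -- flags of `C` that agree on all positions `1, ..., r` are equal (as elements of `C`)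
    (hext : ∀ F ∈ C, ∀ F' ∈ C, (∀ j, 1 ≤ j → j ≤ r → F j = F' j) → F = F')
    -- `d_f(C) > D(i_1,...,i_M)^{(t,n)}`: every pair of distinct flags of `C` is at
    -- distance greater than `D(i_1,...,i_M)^{(t,n)}`
    (hd : ∀ F ∈ C, ∀ F' ∈ C, (∃ j, 1 ≤ j ∧ j ≤ r ∧ F j ≠ F' j) →
      DmultiType n r M hM t i < flagDist r F F') :
    Nat.card C ≤
      Nat.card {G : ℕ → Submodule K (Fin n → K) //
        (∀ l, 1 ≤ l → l ≤ M → finrank K ↥(G l) = t (i l)) ∧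
        (∀ l, 1 ≤ l → l < M → G l ≤ G (l + 1)) ∧
        (∀ l, ¬(1 ≤ l ∧ l ≤ M) → G l = ⊥)} ∧
    Nat.card {G : ℕ → Submodule K (Fin n → K) //
        (∀ l, 1 ≤ l → l ≤ M → finrank K ↥(G l) = t (i l)) ∧
        (∀ l, 1 ≤ l → l < M → G l ≤ G (l + 1)) ∧
        (∀ l, ¬(1 ≤ l ∧ l ≤ M) → G l = ⊥)} =
      gaussBinom (Fintype.card K) n (t (i 1)) *
        ∏ l ∈ Finset.Icc 2 M,
          gaussBinom (Fintype.card K) (n - t (i (l - 1))) (t (i l) - t (i (l - 1))) := by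
  have hF (F) (hF : F ∈ C) : MonotoneOn F (Set.Icc 1 r) :=
    monotoneOn_Icc_of_le_succ (hnest F hF)
  have hdimF (F) (hF : F ∈ C) (j) (hj : j ∈ Set.Icc 1 r) : finrank K (F j) = t j :=
    hdim F hF j hj.1 hj.2
  have ht : MonotoneOn t (Set.Icc 1 r) :=
    monotoneOn_Icc_of_le_succ fun j h1 h2 => (htmono j h1 h2).le
  have hi' : MonotoneOn i (Set.Icc 1 M) :=
    monotoneOn_Icc_of_le_succ fun l h1 h2 => (himono l h1 h2).le
  have hi (l) (hl : l ∈ Set.Icc 1 M) : i l ∈ Set.Icc 1 r :=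
    ⟨hi1.trans (hi' ⟨le_rfl, hM⟩ hl hl.1), (hi' hl ⟨hM, le_rfl⟩ hl.2).trans hiM⟩
  have hinj : Set.InjOn (restrictFlag M i) C := by
    intro F hFC F' hF'C h
    refine hext F hFC F' hF'C fun j h1 h2 => ?_
    by_contra hne
    refine (hd F hFC F' hF'C ⟨j, h1, h2, hne⟩).not_ge (flagDist_le_DmultiType hM hi
      (hF F hFC) (hF F' hF'C) (hdimF F hFC) (hdimF F' hF'C) fun l hl => ?_)
    simpa [restrictFlag, hl.1, hl.2] using congrFun h l
  have hfr : finrank K (Fin n → K) = n := Module.finrank_fin_fun K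
  refine ⟨?_, ?_⟩
  · rw [Nat.card_coe_set_eq]
    exact Set.ncard_le_ncard_of_injOn _ (fun F hFC => restrictFlag_mem_flagsOfType hi hi'
      (hF F hFC) (hdimF F hFC)) hinj (finite_flagsOfType M _)
  · have hiM' : i M ∈ Set.Icc 1 r := hi M ⟨hM, le_rfl⟩
    have htop : t (i M) ≤ finrank K (Fin n → K) :=
      hfr.symm ▸ ((ht hiM' ⟨hiM'.1.trans hiM, le_rfl⟩ hiM).trans_lt htr).le
    have := card_flagsOfType (d := fun l => t (i l)) hM (ht.comp hi' hi) htop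
    rwa [hfr] at this

theorem stmt16 {K : Type*} [Field K] [Fintype K] (n r M : ℕ) (hn : 2 ≤ n) (hr : 1 ≤ r)
    (hM : 1 ≤ M) (hMr : M ≤ r)
    (t : ℕ → ℕ) (ht1 : 1 ≤ t 1) (htr : t r < n)
    (htmono : ∀ j, 1 ≤ j → j < r → t j < t (j + 1))
    (i : ℕ → ℕ) (hi1 : 1 ≤ i 1) (hiM : i M ≤ r)
    (himono : ∀ l, 1 ≤ l → l < M → i l < i (l + 1))
    (C : Set (ℕ → Submodule K (Fin n → K)))
    (hdim : ∀ F ∈ C, ∀ j, 1 ≤ j → j ≤ r → finrank K ↥(F j) = t j)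
    (hnest : ∀ F ∈ C, ∀ j, 1 ≤ j → j < r → F j ≤ F (j + 1))
    -- flags of `C` that agree on all positions `1, ..., r` are equal (as elements of `C`)
    (hext : ∀ F ∈ C, ∀ F' ∈ C, (∀ j, 1 ≤ j → j ≤ r → F j = F' j) → F = F')
    -- `d_f(C) > D(i_1,...,i_M)^{(t,n)}`: every pair of distinct flags of `C` is at
    -- distance greater than `D(i_1,...,i_M)^{(t,n)}`
    (hd : ∀ F ∈ C, ∀ F' ∈ C, (∃ j, 1 ≤ j ∧ j ≤ r ∧ F j ≠ F' j) →
      DmultiType n r M hM t i < flagDist r F F') :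
    Nat.card C ≤
      Nat.card {G : ℕ → Submodule K (Fin n → K) //
        (∀ l, 1 ≤ l → l ≤ M → finrank K ↥(G l) = t (i l)) ∧
        (∀ l, 1 ≤ l → l < M → G l ≤ G (l + 1)) ∧
        (∀ l, ¬(1 ≤ l ∧ l ≤ M) → G l = ⊥)} ∧
    Nat.card {G : ℕ → Submodule K (Fin n → K) //
        (∀ l, 1 ≤ l → l ≤ M → finrank K ↥(G l) = t (i l)) ∧
        (∀ l, 1 ≤ l → l < M → G l ≤ G (l + 1)) ∧
        (∀ l, ¬(1 ≤ l ∧ l ≤ M) → G l = ⊥)} =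
      gaussBinom (Fintype.card K) n (t (i 1)) *
        ∏ l ∈ Finset.Icc 2 M,
          gaussBinom (Fintype.card K) (n - t (i (l - 1))) (t (i l) - t (i (l - 1))) :=
  stmt16_general n r M hM t htr htmono i hi1 hiM himono C hdim hnest hext hd
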